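/- For any balanced lattice design X ∈ U(n, q^s) with n ≥ 2 and s ≥ 2: Ave(χ²)(X) ≥ (n(n−1)/(s(s−1)))(θ² + 2θf + f) + a, where β̄ = s(n−q)/(q(n−1)), θ = ⌊β̄⌋, f = β̄ − θ, and a = (q² n s + n²(1 − s − q))/(q²(s−1)). -/

import Mathlib

open Finset

/-- A design `X ∈ U(n, q^s)` is balanced: `q ∣ n` and every level occurs exactly
`n / q` times in each column. -/
def IsBalanced {n s q : ℕ} (X : Fin n → Fin s → Fin q) : Prop :=
  q ∣ n ∧ ∀ (j : Fin s) (ℓ : Fin q),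
    (univ.filter fun i => X i j = ℓ).card = n / q

/-- The index set of pairs 1 ≤ i < k ≤ n. -/
def pairs (n : ℕ) : Finset (Fin n × Fin n) := univ.filter fun p => p.1 < p.2

/-- The nonorthogonality criterion
Ave(χ²)(X) = (2/(s(s−1))) ∑_{j<l} ∑_{τ₁,τ₂} (N^{(j,l)}_{τ₁,τ₂} − n/q²)². -/
noncomputable def aveChiSq {n s q : ℕ} (X : Fin n → Fin s → Fin q) : ℝ :=
  2 / ((s : ℝ) * ((s : ℝ) - 1)) *
    ∑ p ∈ pairs s, ∑ τ : Fin q × Fin q,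
      (((univ.filter fun i => X i p.1 = τ.1 ∧ X i p.2 = τ.2).card : ℝ)
        - (n : ℝ) / (q : ℝ) ^ 2) ^ 2

/-!
Counting in two ways the pairs of runs that agree on two given factors gives
`∑_{j,l} ∑_τ (N^{(j,l)}_τ)² = ∑_{i,k} δ_{ik}²`, where `δ_{ik}` is the number of factors on which
runs `i` and `k` coincide. Balance fixes the terms with `j = l` and the total
`∑_{i,k} δ_{ik} = sn²/q`; as `δ_{ii} = s`, this gives `∑_{i ≠ k} δ_{ik} = n(n-1)β̄`.
Since the `δ_{ik}` are integers, `δ² ≥ (2θ+1)δ - θ(θ+1)`, and summing over `i ≠ k` bounds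
`∑_{i ≠ k} δ_{ik}²` below by `n(n-1)(θ² + 2θf + f)`.
-/

section FiniteSums

variable {ι : Type*}

lemma sum_sq_card_fiber {β : Type*} [Fintype ι] [Fintype β] [DecidableEq β] (g : ι → β) :
    ∑ b, #{i | g i = b} ^ 2 = #{p : ι × ι | g p.1 = g p.2} := by
  rw [card_eq_sum_card_fiberwise (f := fun p : ι × ι => g p.1) fun _ _ => mem_univ _]
  refine sum_congr rfl fun b _ => ?_
  rw [sq, ← card_product]
  congr 1
  ext ⟨i, k⟩
  simp only [mem_product, mem_filter, mem_univ, true_and]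
  grind

lemma sum_card_filter_comm {α : Type*} [Fintype ι] [Fintype α] (r : α → ι → Prop)
    [∀ a i, Decidable (r a i)] : ∑ a, #{i | r a i} = ∑ i, #{a | r a i} :=
  sum_card_bipartiteAbove_eq_sum_card_bipartiteBelow r

lemma sum_eq_sum_diag_add_sum_offDiag [Fintype ι] [DecidableEq ι] {M : Type*} [AddCommMonoid M]
    (f : ι × ι → M) : ∑ p, f p = ∑ i, f (i, i) + ∑ p ∈ univ.offDiag, f p := by
  rw [← univ_product_univ, ← diag_union_offDiag, sum_union (disjoint_diag_offDiag _), sum_diag]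

lemma sum_sub_sq {R : Type*} [CommRing R] (t : Finset ι) (x : ι → R) (c : R) :
    ∑ i ∈ t, (x i - c) ^ 2 = ∑ i ∈ t, x i ^ 2 - 2 * c * ∑ i ∈ t, x i + #t * c ^ 2 := by
  simp only [sub_sq, sum_add_distrib, sum_sub_distrib, sum_const, nsmul_eq_mul, ← sum_mul,
    ← mul_sum]
  ring

lemma two_mul_add_one_mul_sub_le_sq (d θ : ℕ) :
    (2 * θ + 1) * (d : ℝ) - θ * (θ + 1) ≤ d ^ 2 := by
  -- `(d - θ) * (d - θ - 1) ≥ 0` for integers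
  rcases le_or_gt d θ with h | h
  · have h' : (d : ℝ) ≤ θ := by exact_mod_cast h
    nlinarith
  · have h' : (θ : ℝ) + 1 ≤ d := by exact_mod_cast h
    nlinarith

lemma two_mul_add_one_mul_sum_sub_le_sum_sq (t : Finset ι) (d : ι → ℕ) (θ : ℕ) :
    (2 * θ + 1) * ∑ i ∈ t, (d i : ℝ) - #t * (θ * (θ + 1)) ≤ ∑ i ∈ t, (d i : ℝ) ^ 2 := by
  rw [mul_sum, ← nsmul_eq_mul, ← sum_const, ← sum_sub_distrib]
  exact sum_le_sum fun i _ => two_mul_add_one_mul_sub_le_sq (d i) θ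

end FiniteSums

lemma two_nsmul_sum_pairs {M : Type*} [AddCommGroup M] {m : ℕ} (G : Fin m × Fin m → M)
    (hG : ∀ p, G p.swap = G p) : 2 • ∑ p ∈ pairs m, G p = ∑ p, G p - ∑ j, G (j, j) := by
  rw [sum_eq_sum_diag_add_sum_offDiag, add_sub_cancel_left,
    ← sum_filter_add_sum_filter_not univ.offDiag fun p => p.1 < p.2]
  have hswap : ∑ p ∈ univ.offDiag with ¬p.1 < p.2, G p = ∑ p ∈ pairs m, G p := by
    refine sum_nbij' Prod.swap Prod.swap ?_ ?_ (fun _ _ => rfl) (fun _ _ => rfl)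
      fun p _ => (hG p).symm
    · intro p hp
      simp only [pairs, mem_filter, mem_offDiag, mem_univ, true_and] at hp ⊢
      exact lt_of_le_of_ne (not_lt.mp hp.2) (Ne.symm hp.1)
    · intro p hp
      simp only [pairs, mem_filter, mem_offDiag, mem_univ, true_and] at hp ⊢
      exact ⟨hp.ne', not_lt.mpr hp.le⟩
  have hpairs : univ.offDiag.filter (fun p : Fin m × Fin m => p.1 < p.2) = pairs m := by
    ext p
    simp only [pairs, mem_filter, mem_offDiag, mem_univ, true_and, and_iff_right_iff_imp]
    exact ne_of_lt
  rw [hswap, hpairs, two_nsmul]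

section Design

variable {ι κ α : Type*} [DecidableEq α] (X : ι → κ → α)

def coincidenceNumber [Fintype κ] (i k : ι) : ℕ := #{j | X i j = X k j}

def cellCount [Fintype ι] (j l : κ) (τ : α × α) : ℕ := #{i | X i j = τ.1 ∧ X i l = τ.2}

lemma cellCount_eq_card_fiber [Fintype ι] (j l : κ) (τ : α × α) :
    cellCount X j l τ = #{i | (X i j, X i l) = τ} := by
  simp only [cellCount, Prod.ext_iff]

lemma sum_cellCount [Fintype ι] [Fintype α] (j l : κ) :
    ∑ τ, cellCount X j l τ = Fintype.card ι := by
  simp only [cellCount_eq_card_fiber]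
  exact (card_eq_sum_card_fiberwise fun i _ => mem_univ _).symm

lemma sum_sq_cellCount [Fintype ι] [Fintype α] (j l : κ) :
    ∑ τ, cellCount X j l τ ^ 2 = #{p : ι × ι | X p.1 j = X p.2 j ∧ X p.1 l = X p.2 l} := by
  simp only [cellCount_eq_card_fiber, sum_sq_card_fiber, Prod.mk.injEq]

lemma sum_sq_cellCount_self [Fintype ι] [Fintype α] (j : κ) :
    ∑ τ, cellCount X j j τ ^ 2 = ∑ a, #{i | X i j = a} ^ 2 := by
  simp only [sum_sq_cellCount, and_self, sum_sq_card_fiber]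

lemma coincidenceNumber_self [Fintype κ] (i : ι) : coincidenceNumber X i i = Fintype.card κ := by
  simp [coincidenceNumber]

lemma sum_sum_sq_cellCount [Fintype ι] [Fintype κ] [Fintype α] :
    ∑ jl : κ × κ, ∑ τ, cellCount X jl.1 jl.2 τ ^ 2
      = ∑ ik : ι × ι, coincidenceNumber X ik.1 ik.2 ^ 2 := by
  simp only [sum_sq_cellCount]
  rw [sum_card_filter_comm]
  refine sum_congr rfl fun ik _ => ?_
  rw [coincidenceNumber, sq, ← card_product]
  congr 1
  ext ⟨j, l⟩
  simp

lemma sum_coincidenceNumber [Fintype ι] [Fintype κ] [Fintype α] :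
    ∑ ik : ι × ι, coincidenceNumber X ik.1 ik.2 = ∑ j, ∑ a, #{i | X i j = a} ^ 2 := by
  simp only [coincidenceNumber, sum_sq_card_fiber]
  exact sum_card_filter_comm _

end Design

namespace IsBalanced

variable {n s q : ℕ} {X : Fin n → Fin s → Fin q}

lemma sum_sq_card_fiber (hX : IsBalanced X)
    (hq : q ≠ 0) (j : Fin s) : ∑ a, (#{i | X i j = a} : ℝ) ^ 2 = n ^ 2 / q := by
  have hq' : (q : ℝ) ≠ 0 := by exact_mod_cast hq
  simp only [hX.2 j, Nat.cast_div_charZero hX.1, sum_const, card_univ, Fintype.card_fin,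
    nsmul_eq_mul]
  field_simp

lemma two_mul_sum_pairs_sq_cellCount_sub (hX : IsBalanced X) (hq : q ≠ 0) :
    2 * ∑ p ∈ pairs s, ∑ τ, ((cellCount X p.1 p.2 τ : ℝ) - n / q ^ 2) ^ 2
      = ∑ ik : Fin n × Fin n, (coincidenceNumber X ik.1 ik.2 : ℝ) ^ 2
        - s ^ 2 * n ^ 2 / q ^ 2 - s * n ^ 2 / q + s * n ^ 2 / q ^ 2 := by
  have hq' : (q : ℝ) ≠ 0 := by exact_mod_cast hq
  have hS : ∀ j l, ∑ τ, ((cellCount X j l τ : ℝ) - n / q ^ 2) ^ 2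
      = ∑ τ, (cellCount X j l τ : ℝ) ^ 2 - n ^ 2 / q ^ 2 := by
    intro j l
    have hsum : ∑ τ, (cellCount X j l τ : ℝ) = n := by
      exact_mod_cast (sum_cellCount X j l).trans (Fintype.card_fin n)
    rw [sum_sub_sq, hsum, card_univ, Fintype.card_prod, Fintype.card_fin]
    push_cast
    field_simp
    ring
  have hall : ∑ jl : Fin s × Fin s, ∑ τ, (cellCount X jl.1 jl.2 τ : ℝ) ^ 2
      = ∑ ik : Fin n × Fin n, (coincidenceNumber X ik.1 ik.2 : ℝ) ^ 2 := by
    exact_mod_cast sum_sum_sq_cellCount X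
  have hdiag : ∀ j, ∑ τ, (cellCount X j j τ : ℝ) ^ 2 = n ^ 2 / q := fun j => by
    rw [← hX.sum_sq_card_fiber hq j]
    exact_mod_cast sum_sq_cellCount_self X j
  rw [two_mul, ← two_nsmul, two_nsmul_sum_pairs]
  · simp only [hS, sum_sub_distrib, hall, hdiag, sum_const, card_univ, Fintype.card_prod,
      Fintype.card_fin, nsmul_eq_mul]
    push_cast
    ring
  · intro jl
    simp only [Prod.fst_swap, Prod.snd_swap, hS]
    congr 1
    exact_mod_cast (sum_sq_cellCount X _ _).trans
      ((congrArg card (filter_congr fun _ _ => and_comm)).trans (sum_sq_cellCount X _ _).symm)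

lemma sum_offDiag_coincidenceNumber (hX : IsBalanced X) (hq : q ≠ 0) :
    ∑ ik ∈ univ.offDiag, (coincidenceNumber X ik.1 ik.2 : ℝ) = s * n ^ 2 / q - n * s := by
  have h : ∑ ik : Fin n × Fin n, (coincidenceNumber X ik.1 ik.2 : ℝ)
      = ∑ j, ∑ a, (#{i | X i j = a} : ℝ) ^ 2 := by
    exact_mod_cast sum_coincidenceNumber X
  simp only [sum_eq_sum_diag_add_sum_offDiag, coincidenceNumber_self, hX.sum_sq_card_fiber hq,
    sum_const, card_univ, Fintype.card_fin, nsmul_eq_mul] at h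
  rw [mul_div_assoc]
  linarith

lemma aveChiSq_eq (hX : IsBalanced X)
    (hq : q ≠ 0) :
    aveChiSq X = (∑ ik : Fin n × Fin n, (coincidenceNumber X ik.1 ik.2 : ℝ) ^ 2
        - s ^ 2 * n ^ 2 / q ^ 2 - s * n ^ 2 / q + s * n ^ 2 / q ^ 2) / (s * (s - 1)) := by
  rw [aveChiSq, div_mul_eq_mul_div]
  exact congrArg (· / _) (hX.two_mul_sum_pairs_sq_cellCount_sub hq)

end IsBalanced

theorem aveChiSq_lower_bound_general (n s q : ℕ) (hq : 2 ≤ q) (hn : 2 ≤ n) (hs : 2 ≤ s)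
    (X : Fin n → Fin s → Fin q) (hX : IsBalanced X)
    (βbar : ℝ) (hβbar : βbar = (s : ℝ) * ((n : ℝ) - q) / ((q : ℝ) * ((n : ℝ) - 1)))
    (θ : ℕ)
    (f : ℝ) (hf : f = βbar - θ)
    (a : ℝ) (ha : a = ((q : ℝ) ^ 2 * n * s + (n : ℝ) ^ 2 * (1 - s - q)) /
      ((q : ℝ) ^ 2 * ((s : ℝ) - 1))) :
    aveChiSq X ≥ (n : ℝ) * ((n : ℝ) - 1) / ((s : ℝ) * ((s : ℝ) - 1)) *
        ((θ : ℝ) ^ 2 + 2 * θ * f + f) + a := by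
  have hq0 : q ≠ 0 := by omega
  have hqR : (q : ℝ) ≠ 0 := by positivity
  have hnR : (n : ℝ) - 1 ≠ 0 := by
    have : (2 : ℝ) ≤ n := by exact_mod_cast hn
    linarith
  have hsR : 0 < (s : ℝ) - 1 := by
    have : (2 : ℝ) ≤ s := by exact_mod_cast hs
    linarith
  have hcard : (#(univ : Finset (Fin n)).offDiag : ℝ) = n * (n - 1) := by
    rw [offDiag_card, card_univ, Fintype.card_fin, Nat.cast_sub (Nat.le_mul_self n)]
    push_cast
    ring
  have hoff := two_mul_add_one_mul_sum_sub_le_sum_sq univ.offDiag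
    (fun ik => coincidenceNumber X ik.1 ik.2) θ
  rw [hX.sum_offDiag_coincidenceNumber hq0, hcard] at hoff
  have hmean : (n : ℝ) * (n - 1) * (θ ^ 2 + 2 * θ * f + f)
      = (2 * θ + 1) * (s * n ^ 2 / q - n * s) - n * (n - 1) * (θ * (θ + 1)) := by
    rw [hf, hβbar]
    field_simp
    ring
  rw [hX.aveChiSq_eq hq0, sum_eq_sum_diag_add_sum_offDiag]
  simp only [coincidenceNumber_self, Fintype.card_fin, sum_const, card_univ, nsmul_eq_mul]
  calc (n : ℝ) * (n - 1) / (s * (s - 1)) * (θ ^ 2 + 2 * θ * f + f) + a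
      = ((n : ℝ) * (n - 1) * (θ ^ 2 + 2 * θ * f + f) + n * s ^ 2
          - s ^ 2 * n ^ 2 / q ^ 2 - s * n ^ 2 / q + s * n ^ 2 / q ^ 2) / (s * (s - 1)) := by
        rw [ha]
        field_simp
        ring
    _ ≤ _ := div_le_div_of_nonneg_right (by linarith) (by positivity)

/-- Theorem 4 (lower bound): for a balanced design,
Ave(χ²)(X) ≥ (n(n−1)/(s(s−1)))(θ² + 2θf + f) + a, where β̄ = s(n−q)/(q(n−1)),
θ = ⌊β̄⌋, f = β̄ − θ and a = (q²ns + n²(1 − s − q)) / (q²(s−1)). -/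
theorem aveChiSq_lower_bound (n s q : ℕ) (hq : 2 ≤ q) (hn : 2 ≤ n) (hs : 2 ≤ s)
    (X : Fin n → Fin s → Fin q) (hX : IsBalanced X)
    (βbar : ℝ) (hβbar : βbar = (s : ℝ) * ((n : ℝ) - q) / ((q : ℝ) * ((n : ℝ) - 1)))
    (θ : ℕ) (hθ : θ = ⌊βbar⌋₊)
    (f : ℝ) (hf : f = βbar - θ)
    (a : ℝ) (ha : a = ((q : ℝ) ^ 2 * n * s + (n : ℝ) ^ 2 * (1 - s - q)) /
      ((q : ℝ) ^ 2 * ((s : ℝ) - 1))) :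
    aveChiSq X ≥ (n : ℝ) * ((n : ℝ) - 1) / ((s : ℝ) * ((s : ℝ) - 1)) *
        ((θ : ℝ) ^ 2 + 2 * θ * f + f) + a :=
  aveChiSq_lower_bound_general n s q hq hn hs X hX βbar hβbar θ f hf a ha
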